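/- Fix m ≥ 1 and an invertible symmetric matrix g ∈ Mₘ(ℝ) with inverse entries g^{jk}. Let U ⊆ ℝᵐ be open, let v, σ : U → ℝ be C² and ℓ : U → ℝ be C³. Define q = −⟨∇ℓ,∇ℓ⟩ − □ℓ − σ, S = □v + q v, and σ̃ = σ + □ℓ. Then at every point of U the following identity holds: (eˡ □(e^{−ℓ} v))² / 2 = S²/2 + 2⟨∇ℓ,∇v⟩² + P + R + div B, where P = σ̃⟨∇v,∇v⟩ + 2 Hess ℓ(∇v,∇v) + (−σ̃⟨∇ℓ,∇ℓ⟩ + 2 Hess ℓ(∇ℓ,∇ℓ)) v², R = (div((□ℓ)∇ℓ) − σσ̃ + σ²/2 + (□σ)/2) v², and B = −(2⟨∇ℓ,∇v⟩ + σv)∇v + (v²/2)∇σ + (⟨∇v,∇v⟩ − (□ℓ + ⟨∇ℓ,∇ℓ⟩)v²)∇ℓ. (This is the paper's pointwise Carleman identity for the conjugated wave operator, in the case of a constant-coefficient semi-Riemannian metric on ℝᵐ; the paper proves it on general semi-Riemannian manifolds.) -/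

import Mathlib

noncomputable section

/-- Partial derivative in the `j`-th coordinate on `Fin m → ℝ`. -/
def pd {m : ℕ} (j : Fin m) (f : (Fin m → ℝ) → ℝ) (x : Fin m → ℝ) : ℝ :=
  deriv (fun s => f (Function.update x j s)) (x j)

/-- The pairing `⟨X,Y⟩ = ∑ g_{jk} Xʲ Y^k` for the constant metric `g`. -/
def pairV {m : ℕ} (g : Matrix (Fin m) (Fin m) ℝ) (X Y : Fin m → ℝ) : ℝ :=
  ∑ j, ∑ k, g j k * X j * Y k

/-- The gradient `(∇f)ʲ = ∑ g^{jk} ∂_k f` with respect to the constant metric. -/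
def grad {m : ℕ} (ginv : Matrix (Fin m) (Fin m) ℝ) (f : (Fin m → ℝ) → ℝ)
    (x : Fin m → ℝ) : Fin m → ℝ :=
  fun j => ∑ k, ginv j k * pd k f x

/-- The divergence `div X = ∑ ∂_j Xʲ`. -/
def divV {m : ℕ} (X : (Fin m → ℝ) → Fin m → ℝ) (x : Fin m → ℝ) : ℝ :=
  ∑ j, pd j (fun y => X y j) x

/-- The wave operator `□f = −∑ g^{jk} ∂_j ∂_k f`. -/
def box {m : ℕ} (ginv : Matrix (Fin m) (Fin m) ℝ) (f : (Fin m → ℝ) → ℝ)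
    (x : Fin m → ℝ) : ℝ :=
  -∑ j, ∑ k, ginv j k * pd j (fun y => pd k f y) x

/-- The Hessian `Hess f(X,Y) = ∑ Xʲ Y^k ∂_j ∂_k f`. -/
def hessV {m : ℕ} (f : (Fin m → ℝ) → ℝ) (X Y : Fin m → ℝ) (x : Fin m → ℝ) : ℝ :=
  ∑ j, ∑ k, X j * Y k * pd j (fun y => pd k f y) x

/-! The wave operator is minus the divergence of the gradient, and for a constant metric
`div (φ ∇f) = ⟨∇φ, ∇f⟩ - φ □f`. Applied to `∇(e^{-ℓ} v) = e^{-ℓ} (∇v - v ∇ℓ)` this computes the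
conjugated operator `eˡ □ (e^{-ℓ} ·)`, and applied to the three summands of `B` it computes
`div B`. Differentiating the pairings `⟨∇f, ∇h⟩` produces the Hessian terms; the two Hessians
of `v` that occur cancel by the symmetry of second derivatives, and what is left is a polynomial
identity in finitely many scalars at the point. -/

open Filter Topology

section

variable {m : ℕ} {g ginv : Matrix (Fin m) (Fin m) ℝ} {f h φ v σ ℓ : (Fin m → ℝ) → ℝ}
  {x : Fin m → ℝ}

theorem HasFDerivAt.pd_eq {f' : (Fin m → ℝ) →L[ℝ] ℝ} (hf : HasFDerivAt f f' x) (j : Fin m) :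
    pd j f x = f' (Pi.single j 1) := by
  rw [← Function.update_eq_self j x] at hf
  exact (hf.comp_hasDerivAt (x j) (hasDerivAt_update x j (x j))).deriv

theorem DifferentiableAt.pd_eq (hf : DifferentiableAt ℝ f x) (j : Fin m) :
    pd j f x = fderiv ℝ f x (Pi.single j 1) :=
  hf.hasFDerivAt.pd_eq j

theorem Filter.EventuallyEq.pd_eq (hfh : f =ᶠ[𝓝 x] h) (j : Fin m) : pd j f x = pd j h x := by
  have hline : Tendsto (fun s => Function.update x j s) (𝓝 (x j)) (𝓝 x) := by
    simpa using ((hasDerivAt_update x j (x j)).continuousAt).tendsto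
  exact (hfh.comp_tendsto hline).deriv_eq

theorem pd_add (hf : DifferentiableAt ℝ f x) (hh : DifferentiableAt ℝ h x) (j : Fin m) :
    pd j (fun y => f y + h y) x = pd j f x + pd j h x := by
  rw [(hf.hasFDerivAt.fun_add hh.hasFDerivAt).pd_eq, hf.pd_eq, hh.pd_eq]
  rfl

theorem pd_mul (hf : DifferentiableAt ℝ f x) (hh : DifferentiableAt ℝ h x) (j : Fin m) :
    pd j (fun y => f y * h y) x = pd j f x * h x + f x * pd j h x := by
  rw [(hf.hasFDerivAt.fun_mul hh.hasFDerivAt).pd_eq, hf.pd_eq, hh.pd_eq]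
  simp only [add_apply, smul_apply, smul_eq_mul]
  ring

theorem pd_const_mul (c : ℝ) (f : (Fin m → ℝ) → ℝ) (x : Fin m → ℝ) (j : Fin m) :
    pd j (fun y => c * f y) x = c * pd j f x :=
  deriv_const_mul_field c

theorem pd_sum {ι : Type*} {s : Finset ι} {F : ι → (Fin m → ℝ) → ℝ}
    (hF : ∀ i ∈ s, DifferentiableAt ℝ (F i) x) (j : Fin m) :
    pd j (fun y => ∑ i ∈ s, F i y) x = ∑ i ∈ s, pd j (F i) x := by
  rw [(HasFDerivAt.fun_sum fun i hi => (hF i hi).hasFDerivAt).pd_eq, sum_apply]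
  exact Finset.sum_congr rfl fun i hi => ((hF i hi).pd_eq j).symm

theorem ContDiffAt.eventually_differentiableAt {n : WithTop ℕ∞} (hf : ContDiffAt ℝ n f x)
    (hn : 1 ≤ n) : ∀ᶠ y in 𝓝 x, DifferentiableAt ℝ f y := by
  obtain ⟨u, hu, hfu⟩ := hf.contDiffOn hn (by simp)
  exact (hfu.differentiableOn one_ne_zero).eventually_differentiableAt hu

theorem contDiffAt_pd {n k : WithTop ℕ∞} (hf : ContDiffAt ℝ n f x) (hkn : k + 1 ≤ n)
    (j : Fin m) : ContDiffAt ℝ k (fun y => pd j f y) x := by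
  refine ((hf.fderiv_right hkn).clm_apply
    (contDiffAt_const (c := Pi.single j 1))).congr_of_eventuallyEq ?_
  filter_upwards [hf.eventually_differentiableAt (le_add_self.trans hkn)] with y hy
  exact hy.pd_eq j

theorem ContDiffAt.pd_pd_comm (hf : ContDiffAt ℝ 2 f x) (j k : Fin m) :
    pd j (fun y => pd k f y) x = pd k (fun y => pd j f y) x := by
  have hpd : ∀ i l, pd i (fun y => pd l f y) x =
      fderiv ℝ (fderiv ℝ f) x (Pi.single i 1) (Pi.single l 1) := by
    intro i l
    have hfd : DifferentiableAt ℝ (fderiv ℝ f) x :=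
      (hf.fderiv_right (m := 1) le_rfl).differentiableAt one_ne_zero
    have hev : (fun y => pd l f y) =ᶠ[𝓝 x] fun y => fderiv ℝ f y (Pi.single l 1) := by
      filter_upwards [hf.eventually_differentiableAt (by norm_num)] with y hy
      exact hy.pd_eq l
    rw [hev.pd_eq, (hfd.hasFDerivAt.clm_apply (hasFDerivAt_const _ x)).pd_eq]
    simp
  rw [hpd, hpd, (hf.isSymmSndFDerivAt (by simp)).eq]

theorem differentiableAt_pd (hf : ContDiffAt ℝ 2 f x) (j : Fin m) :
    DifferentiableAt ℝ (fun y => pd j f y) x :=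
  (contDiffAt_pd hf (k := 1) (by norm_num) j).differentiableAt one_ne_zero

theorem differentiableAt_grad (hf : ContDiffAt ℝ 2 f x) : DifferentiableAt ℝ (grad ginv f) x :=
  differentiableAt_pi.2 fun i =>
    DifferentiableAt.fun_sum fun k _ => (differentiableAt_pd hf k).const_mul (ginv i k)

theorem contDiffAt_box {n k : WithTop ℕ∞} (hf : ContDiffAt ℝ n f x) (hkn : k + 2 ≤ n) :
    ContDiffAt ℝ k (box ginv f) x := by
  have hkn' : k + 1 + 1 ≤ n := by rwa [add_assoc, one_add_one_eq_two]
  exact (ContDiffAt.sum fun i _ => ContDiffAt.sum fun j _ =>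
    contDiffAt_const.mul (contDiffAt_pd (contDiffAt_pd hf hkn' j) le_rfl i)).neg

theorem pd_grad (hf : ContDiffAt ℝ 2 f x) (i j : Fin m) :
    pd j (fun y => grad ginv f y i) x = ∑ k, ginv i k * pd j (fun y => pd k f y) x := by
  simp only [grad]
  rw [pd_sum fun k _ => (differentiableAt_pd hf k).const_mul _]
  simp only [pd_const_mul]

theorem hessV_comm (hf : ContDiffAt ℝ 2 f x) (X Y : Fin m → ℝ) :
    hessV f X Y x = hessV f Y X x := by
  rw [hessV, hessV, Finset.sum_comm]
  exact Finset.sum_congr rfl fun j _ => Finset.sum_congr rfl fun k _ => by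
    rw [hf.pd_pd_comm]; ring

theorem Filter.EventuallyEq.divV_eq {X Y : (Fin m → ℝ) → Fin m → ℝ} (hXY : X =ᶠ[𝓝 x] Y) :
    divV X x = divV Y x :=
  Finset.sum_congr rfl fun j _ =>
    Filter.EventuallyEq.pd_eq (hXY.mono fun _ hy => congrFun hy j) j

theorem divV_add {X Y : (Fin m → ℝ) → Fin m → ℝ} (hX : DifferentiableAt ℝ X x)
    (hY : DifferentiableAt ℝ Y x) : divV (fun y => X y + Y y) x = divV X x + divV Y x := by
  rw [divV, divV, divV, ← Finset.sum_add_distrib]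
  exact Finset.sum_congr rfl fun j _ =>
    pd_add (differentiableAt_pi.1 hX j) (differentiableAt_pi.1 hY j) j

theorem box_eq_neg_divV_grad (hf : ContDiffAt ℝ 2 f x) :
    box ginv f x = -divV (grad ginv f) x := by
  simp only [box, divV, pd_grad hf]

open Matrix in
theorem pairV_eq_dotProduct_mulVec (g : Matrix (Fin m) (Fin m) ℝ) (X Y : Fin m → ℝ) :
    pairV g X Y = X ⬝ᵥ g *ᵥ Y := by
  simp only [pairV, dotProduct, mulVec, Finset.mul_sum]
  exact Finset.sum_congr rfl fun j _ => Finset.sum_congr rfl fun k _ => by ring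

open Matrix in
theorem pairV_comm (hg : g.IsSymm) (X Y : Fin m → ℝ) : pairV g X Y = pairV g Y X := by
  rw [pairV_eq_dotProduct_mulVec, pairV_eq_dotProduct_mulVec, dotProduct_mulVec,
    ← mulVec_transpose, hg.eq, dotProduct_comm]

open Matrix in
theorem pairV_grad_left (hg : g.IsSymm) (hginv : g * ginv = 1) (φ : (Fin m → ℝ) → ℝ)
    (x X : Fin m → ℝ) : pairV g (grad ginv φ x) X = ∑ k, pd k φ x * X k := by
  rw [pairV_comm hg, pairV_eq_dotProduct_mulVec, dotProduct_comm]
  change g *ᵥ (ginv *ᵥ fun k => pd k φ x) ⬝ᵥ X = _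
  rw [mulVec_mulVec, hginv, one_mulVec]
  rfl

theorem pairV_grad_of_hasFDerivAt (hg : g.IsSymm) (hginv : g * ginv = 1)
    {φ' : (Fin m → ℝ) →L[ℝ] ℝ} (hφ : HasFDerivAt φ φ' x) (X : Fin m → ℝ) :
    pairV g (grad ginv φ x) X = φ' X := by
  rw [pairV_grad_left hg hginv]
  conv_rhs => rw [← Finset.univ_sum_single X, map_sum]
  refine Finset.sum_congr rfl fun k _ => ?_
  rw [hφ.pd_eq, show Pi.single k (X k) = X k • (Pi.single k 1 : Fin m → ℝ) by
    rw [← Pi.single_smul', smul_eq_mul, mul_one], map_smul, smul_eq_mul, mul_comm]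

theorem divV_smul_grad (hg : g.IsSymm) (hginv : g * ginv = 1) (hφ : DifferentiableAt ℝ φ x)
    (hf : ContDiffAt ℝ 2 f x) :
    divV (fun y => φ y • grad ginv f y) x =
      pairV g (grad ginv φ x) (grad ginv f x) - φ x * box ginv f x := by
  rw [divV, box_eq_neg_divV_grad hf, divV, pairV_grad_left hg hginv, mul_neg, sub_neg_eq_add,
    Finset.mul_sum, ← Finset.sum_add_distrib]
  exact Finset.sum_congr rfl fun j _ =>
    pd_mul hφ (differentiableAt_pi.1 (differentiableAt_grad hf) j) j

theorem differentiableAt_pairV_grad (hf : ContDiffAt ℝ 2 f x) (hh : ContDiffAt ℝ 2 h x) :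
    DifferentiableAt ℝ (fun y => pairV g (grad ginv f y) (grad ginv h y)) x := by
  have hgf := differentiableAt_grad (ginv := ginv) hf
  have hgh := differentiableAt_grad (ginv := ginv) hh
  simp only [pairV]
  fun_prop

theorem pairV_grad_pairV_grad (hg : g.IsSymm) (hginv : g * ginv = 1) (hf : ContDiffAt ℝ 2 f x)
    (hh : ContDiffAt ℝ 2 h x) (X : Fin m → ℝ) :
    pairV g (grad ginv (fun y => pairV g (grad ginv f y) (grad ginv h y)) x) X =
      hessV f X (grad ginv h x) x + hessV h X (grad ginv f x) x := by
  have hgradh := differentiableAt_grad (ginv := ginv) hh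
  have hginv_symm : ginv.IsSymm := Matrix.inv_eq_right_inv hginv ▸ hg.inv
  have hpair : (fun y => pairV g (grad ginv f y) (grad ginv h y)) =
      fun y => ∑ p, pd p f y * grad ginv h y p :=
    funext fun y => pairV_grad_left hg hginv f y _
  rw [hpair, pairV_grad_left hg hginv, hessV, hessV, ← Finset.sum_add_distrib]
  refine Finset.sum_congr rfl fun k _ => ?_
  rw [pd_sum fun p _ => (differentiableAt_pd hf p).fun_mul (differentiableAt_pi.1 hgradh p)]
  simp only [pd_mul (differentiableAt_pd hf _) (differentiableAt_pi.1 hgradh _), pd_grad hh]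
  simp only [grad, Finset.sum_mul, Finset.mul_sum, add_mul, Finset.sum_add_distrib]
  congr 1
  · exact Finset.sum_congr rfl fun p _ => Finset.sum_congr rfl fun q _ => by ring
  · rw [Finset.sum_comm]
    refine Finset.sum_congr rfl fun q _ => Finset.sum_congr rfl fun p _ => ?_
    rw [hginv_symm.apply p q]
    ring

theorem exp_mul_box_exp_neg_mul (hg : g.IsSymm) (hginv : g * ginv = 1)
    (hℓ : ContDiffAt ℝ 2 ℓ x) (hv : ContDiffAt ℝ 2 v x) :
    Real.exp (ℓ x) * box ginv (fun y => Real.exp (-ℓ y) * v y) x =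
      box ginv v x + 2 * pairV g (grad ginv ℓ x) (grad ginv v x)
        - (box ginv ℓ x + pairV g (grad ginv ℓ x) (grad ginv ℓ x)) * v x := by
  have hE : ContDiffAt ℝ 2 (fun y => Real.exp (-ℓ y)) x := hℓ.neg.exp
  have hℓd := (hℓ.differentiableAt two_ne_zero).hasFDerivAt
  have hvd := (hv.differentiableAt two_ne_zero).hasFDerivAt
  have hgrad : grad ginv (fun y => Real.exp (-ℓ y) * v y) =ᶠ[𝓝 x]
      fun y => Real.exp (-ℓ y) • grad ginv v y + (-(Real.exp (-ℓ y) * v y)) • grad ginv ℓ y := by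
    filter_upwards [hℓ.eventually_differentiableAt one_le_two,
      hv.eventually_differentiableAt one_le_two] with y hℓy hvy
    funext i
    simp only [grad, Pi.add_apply, Pi.smul_apply, smul_eq_mul, hℓy.pd_eq, hvy.pd_eq,
      (hℓy.hasFDerivAt.fun_neg.exp.fun_mul hvy.hasFDerivAt).pd_eq, Finset.mul_sum,
      ← Finset.sum_add_distrib]
    refine Finset.sum_congr rfl fun k _ => ?_
    simp only [add_apply, smul_apply, neg_apply, smul_eq_mul]
    ring
  have hEd := hE.differentiableAt two_ne_zero
  have hEvd := (hEd.fun_mul hvd.differentiableAt).fun_neg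
  rw [box_eq_neg_divV_grad (hE.mul hv), hgrad.divV_eq,
    divV_add (hEd.fun_smul (differentiableAt_grad hv))
      (hEvd.fun_smul (differentiableAt_grad hℓ)),
    divV_smul_grad hg hginv hEd hv, divV_smul_grad hg hginv hEvd hℓ,
    pairV_grad_of_hasFDerivAt hg hginv hℓd.fun_neg.exp,
    pairV_grad_of_hasFDerivAt hg hginv (hℓd.fun_neg.exp.fun_mul hvd).fun_neg]
  simp only [add_apply, smul_apply, neg_apply, smul_eq_mul,
    ← pairV_grad_of_hasFDerivAt hg hginv hℓd, ← pairV_grad_of_hasFDerivAt hg hginv hvd,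
    pairV_comm hg (grad ginv v x)]
  rw [Real.exp_neg]
  field_simp
  ring

theorem divV_carleman_flux (hg : g.IsSymm) (hginv : g * ginv = 1) (hv : ContDiffAt ℝ 2 v x)
    (hσ : ContDiffAt ℝ 2 σ x) (hℓ : ContDiffAt ℝ 3 ℓ x) :
    divV (fun y =>
        (-(2 * pairV g (grad ginv ℓ y) (grad ginv v y) + σ y * v y)) • grad ginv v y
        + (v y ^ 2 / 2) • grad ginv σ y
        + (pairV g (grad ginv v y) (grad ginv v y)
            - (box ginv ℓ y + pairV g (grad ginv ℓ y) (grad ginv ℓ y)) * v y ^ 2)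
          • grad ginv ℓ y) x =
      (2 * pairV g (grad ginv ℓ x) (grad ginv v x) + σ x * v x) * box ginv v x
        - 2 * hessV ℓ (grad ginv v x) (grad ginv v x) x
        - σ x * pairV g (grad ginv v x) (grad ginv v x)
        - v x ^ 2 / 2 * box ginv σ x
        - v x ^ 2 * pairV g (grad ginv (box ginv ℓ) x) (grad ginv ℓ x)
        - 2 * v x ^ 2 * hessV ℓ (grad ginv ℓ x) (grad ginv ℓ x) x
        - 2 * v x * (box ginv ℓ x + pairV g (grad ginv ℓ x) (grad ginv ℓ x))
            * pairV g (grad ginv ℓ x) (grad ginv v x)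
        - (pairV g (grad ginv v x) (grad ginv v x)
            - (box ginv ℓ x + pairV g (grad ginv ℓ x) (grad ginv ℓ x)) * v x ^ 2)
          * box ginv ℓ x := by
  have hℓ2 : ContDiffAt ℝ 2 ℓ x := hℓ.of_le (by norm_num)
  have hvd := (hv.differentiableAt two_ne_zero).hasFDerivAt
  have hσd := (hσ.differentiableAt two_ne_zero).hasFDerivAt
  have hboxd := ((contDiffAt_box (ginv := ginv) hℓ (k := 1) (by norm_num)).differentiableAt
    one_ne_zero).hasFDerivAt
  have hℓv := (differentiableAt_pairV_grad (g := g) (ginv := ginv) hℓ2 hv).hasFDerivAt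
  have hvv := (differentiableAt_pairV_grad (g := g) (ginv := ginv) hv hv).hasFDerivAt
  have hℓℓ := (differentiableAt_pairV_grad (g := g) (ginv := ginv) hℓ2 hℓ2).hasFDerivAt
  have hφ₁ := ((hℓv.const_mul 2).fun_add (hσd.fun_mul hvd)).fun_neg
  -- `v y ^ 2 / 2` is by definition `v y ^ 2 * 2⁻¹`
  have hφ₂ : HasFDerivAt (fun y => v y ^ 2 / 2) _ x := (hvd.pow 2).mul_const (2⁻¹ : ℝ)
  have hφ₃ := hvv.fun_sub ((hboxd.fun_add hℓℓ).fun_mul (hvd.pow 2))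
  have hB₁ := hφ₁.differentiableAt.fun_smul (differentiableAt_grad (ginv := ginv) hv)
  have hB₂ := hφ₂.differentiableAt.fun_smul (differentiableAt_grad (ginv := ginv) hσ)
  have hB₃ := hφ₃.differentiableAt.fun_smul (differentiableAt_grad (ginv := ginv) hℓ2)
  rw [divV_add (hB₁.fun_add hB₂) hB₃, divV_add hB₁ hB₂,
    divV_smul_grad hg hginv hφ₁.differentiableAt hv,
    divV_smul_grad hg hginv hφ₂.differentiableAt hσ,
    divV_smul_grad hg hginv hφ₃.differentiableAt hℓ2,
    pairV_grad_of_hasFDerivAt hg hginv hφ₁, pairV_grad_of_hasFDerivAt hg hginv hφ₂,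
    pairV_grad_of_hasFDerivAt hg hginv hφ₃]
  simp only [add_apply, sub_apply, smul_apply, neg_apply, smul_eq_mul,
    nsmul_eq_mul, Nat.cast_ofNat, Nat.add_one_sub_one, pow_one,
    ← pairV_grad_of_hasFDerivAt hg hginv hvd, ← pairV_grad_of_hasFDerivAt hg hginv hσd,
    ← pairV_grad_of_hasFDerivAt hg hginv hboxd,
    ← pairV_grad_of_hasFDerivAt hg hginv hℓv, ← pairV_grad_of_hasFDerivAt hg hginv hvv,
    ← pairV_grad_of_hasFDerivAt hg hginv hℓℓ]
  rw [pairV_grad_pairV_grad hg hginv hℓ2 hv, pairV_grad_pairV_grad hg hginv hv hv,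
    pairV_grad_pairV_grad hg hginv hℓ2 hℓ2, hessV_comm hv (grad ginv v x),
    pairV_comm hg (grad ginv v x) (grad ginv σ x), pairV_comm hg (grad ginv v x) (grad ginv ℓ x)]
  ring

end

theorem carleman_pointwise_identity_general
    (m : ℕ)
    (g ginv : Matrix (Fin m) (Fin m) ℝ) (hg : g.IsSymm)
    (hginv : g * ginv = 1)
    (U : Set (Fin m → ℝ)) (hU : IsOpen U)
    (v σ ℓ : (Fin m → ℝ) → ℝ)
    (hv : ContDiffOn ℝ 2 v U) (hσ : ContDiffOn ℝ 2 σ U) (hℓ : ContDiffOn ℝ 3 ℓ U) :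
    ∀ x ∈ U,
      (Real.exp (ℓ x) * box ginv (fun y => Real.exp (-ℓ y) * v y) x) ^ 2 / 2 =
        -- S² / 2, where S = □v + q v and q = −⟨∇ℓ,∇ℓ⟩ − □ℓ − σ
        (box ginv v x +
          (-pairV g (grad ginv ℓ x) (grad ginv ℓ x) - box ginv ℓ x - σ x) * v x) ^ 2 / 2
        -- 2⟨∇ℓ,∇v⟩²
        + 2 * (pairV g (grad ginv ℓ x) (grad ginv v x)) ^ 2
        -- P, with σ̃ = σ + □ℓ
        + ((σ x + box ginv ℓ x) * pairV g (grad ginv v x) (grad ginv v x)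
            + 2 * hessV ℓ (grad ginv v x) (grad ginv v x) x
            + (-(σ x + box ginv ℓ x) * pairV g (grad ginv ℓ x) (grad ginv ℓ x)
                + 2 * hessV ℓ (grad ginv ℓ x) (grad ginv ℓ x) x) * v x ^ 2)
        -- R
        + (divV (fun y => box ginv ℓ y • grad ginv ℓ y) x
            - σ x * (σ x + box ginv ℓ x) + σ x ^ 2 / 2 + box ginv σ x / 2) * v x ^ 2
        -- div B
        + divV (fun y =>
            (-(2 * pairV g (grad ginv ℓ y) (grad ginv v y) + σ y * v y)) • grad ginv v y
            + (v y ^ 2 / 2) • grad ginv σ y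
            + (pairV g (grad ginv v y) (grad ginv v y)
                - (box ginv ℓ y + pairV g (grad ginv ℓ y) (grad ginv ℓ y)) * v y ^ 2)
              • grad ginv ℓ y) x := by
  intro x hx
  have hvx := hv.contDiffAt (hU.mem_nhds hx)
  have hσx := hσ.contDiffAt (hU.mem_nhds hx)
  have hℓx := hℓ.contDiffAt (hU.mem_nhds hx)
  have hℓx₂ : ContDiffAt ℝ 2 ℓ x := hℓx.of_le (by norm_num)
  have hboxℓ := (contDiffAt_box (ginv := ginv) hℓx (k := 1) (by norm_num)).differentiableAt
    one_ne_zero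
  rw [exp_mul_box_exp_neg_mul hg hginv hℓx₂ hvx, divV_smul_grad hg hginv hboxℓ hℓx₂,
    divV_carleman_flux hg hginv hvx hσx hℓx]
  ring

/-- The pointwise Carleman identity for the conjugated wave operator
`eˡ □ (e^{−ℓ} ·)`, for a constant-coefficient semi-Riemannian metric on `ℝᵐ`. -/
theorem carleman_pointwise_identity
    (m : ℕ) (hm : 1 ≤ m)
    (g ginv : Matrix (Fin m) (Fin m) ℝ) (hg : g.IsSymm)
    (hginv : g * ginv = 1) (hginv' : ginv * g = 1)
    (U : Set (Fin m → ℝ)) (hU : IsOpen U)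
    (v σ ℓ : (Fin m → ℝ) → ℝ)
    (hv : ContDiffOn ℝ 2 v U) (hσ : ContDiffOn ℝ 2 σ U) (hℓ : ContDiffOn ℝ 3 ℓ U) :
    ∀ x ∈ U,
      (Real.exp (ℓ x) * box ginv (fun y => Real.exp (-ℓ y) * v y) x) ^ 2 / 2 =
        -- S² / 2, where S = □v + q v and q = −⟨∇ℓ,∇ℓ⟩ − □ℓ − σ
        (box ginv v x +
          (-pairV g (grad ginv ℓ x) (grad ginv ℓ x) - box ginv ℓ x - σ x) * v x) ^ 2 / 2
        -- 2⟨∇ℓ,∇v⟩²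
        + 2 * (pairV g (grad ginv ℓ x) (grad ginv v x)) ^ 2
        -- P, with σ̃ = σ + □ℓ
        + ((σ x + box ginv ℓ x) * pairV g (grad ginv v x) (grad ginv v x)
            + 2 * hessV ℓ (grad ginv v x) (grad ginv v x) x
            + (-(σ x + box ginv ℓ x) * pairV g (grad ginv ℓ x) (grad ginv ℓ x)
                + 2 * hessV ℓ (grad ginv ℓ x) (grad ginv ℓ x) x) * v x ^ 2)
        -- R
        + (divV (fun y => box ginv ℓ y • grad ginv ℓ y) x
            - σ x * (σ x + box ginv ℓ x) + σ x ^ 2 / 2 + box ginv σ x / 2) * v x ^ 2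
        -- div B
        + divV (fun y =>
            (-(2 * pairV g (grad ginv ℓ y) (grad ginv v y) + σ y * v y)) • grad ginv v y
            + (v y ^ 2 / 2) • grad ginv σ y
            + (pairV g (grad ginv v y) (grad ginv v y)
                - (box ginv ℓ y + pairV g (grad ginv ℓ y) (grad ginv ℓ y)) * v y ^ 2)
              • grad ginv ℓ y) x :=
  carleman_pointwise_identity_general m g ginv hg hginv U hU v σ ℓ hv hσ hℓ

end
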